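/- arXiv:1112.6010 — 8 statements merged into one kernel-verified Lean document; each statement's English description precedes it below -/
import Mathlib

section
/- For k ≥ 2 and ε > 0, let x = x₁(ε) > 1 satisfy log(1 + 1/x)/log x = ε and let x_k > 1 satisfy log(1 + 1/(x_k + x_k² + ⋯ + x_k^k))/log x_k = ε. Then x_k < (k·x)^{1/k}. -/
open Real Filter

noncomputable def G (n : ℕ) : ℝ := (∑ d ∈ n.divisors, (d : ℝ)) / (n * Real.log (Real.log n))

def sigma' (n : ℕ) : ℕ := ∑ d ∈ n.divisors, d

def IsGA1 (N : ℕ) : Prop :=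
  1 < N ∧ ¬ N.Prime ∧ ∀ p : ℕ, p.Prime → p ∣ N → G (N / p) ≤ G N

def IsGA2 (N : ℕ) : Prop :=
  1 < N ∧ ∀ a : ℕ, 0 < a → G (a * N) ≤ G N

def IsCA (N : ℕ) (ε : ℝ) : Prop :=
  0 < N ∧ ∀ n : ℕ, 1 < n → (sigma' n : ℝ) / (n : ℝ) ^ (1 + ε) ≤ (sigma' N : ℝ) / (N : ℝ) ^ (1 + ε)

noncomputable def F (t : ℝ) (k : ℕ) : ℝ :=
  Real.log (1 + 1 / (∑ i ∈ Finset.Icc 1 k, t ^ i)) / Real.log t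

noncomputable def chebTheta (n : ℕ) : ℝ :=
  ∑ p ∈ Finset.filter Nat.Prime (Finset.range (n + 1)), Real.log p

/-!
Suppose `x_k ^ k ≥ k x`. Since `log (1 + 1/S) < 1/S` and `S = x_k + ⋯ + x_k ^ k ≥ x_k ^ k`,
`ε log (k x) ≤ k ε log x_k < k / x_k ^ k ≤ 1 / x`. On the other hand
`ε log x = log (1 + 1/x) ≥ 1/(x+1)`, so `ε log k < 1/(x(x+1))` and `ε ≥ 1/((x+1) log x)`,
whence `log k < log x / x ≤ 1/e < log 2`, contradicting `k ≥ 2`.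
-/

lemma F_one (t : ℝ) : F t 1 = log (1 + 1 / t) / log t := by
  simp [F]

lemma pow_le_sum_Icc_pow {t : ℝ} (ht : 0 ≤ t) {k : ℕ} (hk : 1 ≤ k) :
    t ^ k ≤ ∑ i ∈ Finset.Icc 1 k, t ^ i :=
  Finset.single_le_sum (fun i _ => pow_nonneg ht i) (Finset.mem_Icc.2 ⟨hk, le_rfl⟩)

lemma F_mul_log_lt {t : ℝ} (ht : 1 < t) {k : ℕ} (hk : 1 ≤ k) :
    F t k * log t < 1 / t ^ k := by
  set S := ∑ i ∈ Finset.Icc 1 k, t ^ i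
  have htk : 0 < t ^ k := pow_pos (by linarith) k
  have hS : t ^ k ≤ S := pow_le_sum_Icc_pow (by linarith) hk
  have hS0 : 0 < S := htk.trans_le hS
  calc F t k * log t = log (1 + 1 / S) := div_mul_cancel₀ _ (log_pos ht).ne'
    _ < 1 / S := by
      have := log_lt_sub_one_of_pos (by positivity : 0 < 1 + 1 / S) (by simp [hS0.ne'])
      linarith
    _ ≤ 1 / t ^ k := one_div_le_one_div_of_le htk hS

lemma inv_add_one_le_log_one_add_inv {x : ℝ} (hx : 0 < x) : 1 / (x + 1) ≤ log (1 + 1 / x) := by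
  have h := one_sub_inv_le_log_of_pos (by positivity : 0 < 1 + 1 / x)
  have hrw : 1 - (1 + 1 / x)⁻¹ = 1 / (x + 1) := by field_simp; ring
  rwa [hrw] at h

lemma log_div_self_lt_log_two {x : ℝ} (hx : 0 < x) : log x / x < log 2 := by
  have h : log x / x ≤ exp (-1) := by
    simpa [exp_neg, exp_log hx, div_eq_mul_inv] using mul_exp_neg_le_exp_neg_one (log x)
  linarith [exp_neg_one_lt_half, log_two_gt_d9]

lemma log_lt_log_div_self_of_F_one_mul_log_lt {x c : ℝ} (hx : 1 < x) (hc : 1 ≤ c)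
    (h : F x 1 * log (c * x) < 1 / x) : log c < log x / x := by
  have hx0 : 0 < x := by linarith
  have hεx : F x 1 * log x = log (1 + 1 / x) := by
    rw [F_one, div_mul_cancel₀ _ (log_pos hx).ne']
  set ε := F x 1
  have hεc : ε * log c < 1 / (x * (x + 1)) := by
    have hsplit : 1 / x - 1 / (x + 1) = 1 / (x * (x + 1)) := by field_simp; ring
    rw [log_mul (by positivity) hx0.ne'] at h
    linarith [inv_add_one_le_log_one_add_inv hx0]
  have hc0 : 0 ≤ log c := log_nonneg hc
  have h' : log c * (1 / (x + 1)) < log x * (1 / (x * (x + 1))) := calc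
    log c * (1 / (x + 1)) ≤ log c * (ε * log x) := by
      rw [hεx]; gcongr; exact inv_add_one_le_log_one_add_inv hx0
    _ = log x * (ε * log c) := by ring
    _ < log x * (1 / (x * (x + 1))) := by gcongr; exact log_pos hx
  rw [lt_div_iff₀ hx0]
  field_simp at h'
  linarith

theorem stmt3 (k : ℕ) (hk : 2 ≤ k) (ε : ℝ) (hε : 0 < ε)
    (x xk : ℝ) (hx : 1 < x) (hxk : 1 < xk)
    (hFx : F x 1 = ε) (hFxk : F xk k = ε) :
    xk < (k * x) ^ ((1 : ℝ) / k) := by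
  have hx0 : 0 < x := by linarith
  have hk0 : (0 : ℝ) < k := by positivity
  by_contra! hcon
  have hkx : k * x ≤ xk ^ k := by
    rwa [one_div, rpow_inv_le_iff_of_pos (by positivity) (by linarith) hk0, rpow_natCast] at hcon
  have hupper : ε * log (k * x) < 1 / x := calc
    ε * log (k * x) ≤ ε * log (xk ^ k) := by gcongr
    _ = k * (F xk k * log xk) := by rw [log_pow, hFxk]; ring
    _ < k * (1 / xk ^ k) := by gcongr; exact F_mul_log_lt hxk (by omega)
    _ ≤ 1 / x := by
      rw [mul_one_div, div_le_div_iff₀ (by positivity) hx0]; linarith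
  have hlogk : log k < log x / x :=
    log_lt_log_div_self_of_F_one_mul_log_lt hx (by exact_mod_cast (by omega : 1 ≤ k))
      (hFx ▸ hupper)
  have h2k : log 2 ≤ log k := log_le_log two_pos (by exact_mod_cast hk)
  linarith [log_div_self_lt_log_two hx0]
end

section
/- Let N₀ be a colossally abundant number of parameter ε₀ > 0, and let N > N₀ be an integer such that for some ε > 0 and all n ≥ N₀ we have σ(n)/n^{1+ε} ≤ σ(N)/N^{1+ε}. Then N is colossally abundant of parameter ε, i.e., σ(n)/n^{1+ε} ≤ σ(N)/N^{1+ε} holds for all integers n > 1. -/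
open Real Filter

/-!
Comparing `N₀` with `N` forces `ε ≤ ε₀`: otherwise passing from `ε₀` to `ε` multiplies
`σ(n)/n^{1+ε₀}` by the factor `n^{ε₀-ε}`, strictly decreasing in `n`, and the maximality of `N₀`
at `ε₀` would turn into `σ(N)/N^{1+ε} < σ(N₀)/N₀^{1+ε}`. With `ε ≤ ε₀` the same factor is
increasing, so every `n < N₀` stays below `N₀`, hence below `N`, at parameter `ε`.
-/

noncomputable def abundancy (ε : ℝ) (n : ℕ) : ℝ := (sigma' n : ℝ) / (n : ℝ) ^ (1 + ε)

lemma sigma'_pos {n : ℕ} (hn : 0 < n) : 0 < sigma' n := by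
  simpa [sigma', ← ArithmeticFunction.sigma_one_apply] using
    ArithmeticFunction.sigma_pos 1 n hn.ne'

lemma abundancy_pos {n : ℕ} (hn : 0 < n) (ε : ℝ) : 0 < abundancy ε n := by
  have := sigma'_pos hn
  unfold abundancy
  positivity

lemma abundancy_eq_mul_rpow {n : ℕ} (hn : 0 < n) (ε ε' : ℝ) :
    abundancy ε n = abundancy ε' n * (n : ℝ) ^ (ε' - ε) := by
  have hn' : (0 : ℝ) < n := by exact_mod_cast hn
  have hsplit : (n : ℝ) ^ (1 + ε') = (n : ℝ) ^ (1 + ε) * (n : ℝ) ^ (ε' - ε) := by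
    rw [← Real.rpow_add hn']
    ring_nf
  unfold abundancy
  rw [hsplit]
  field_simp

lemma abundancy_le_of_le_of_le {a b : ℕ} {ε ε' : ℝ} (ha : 0 < a) (hab : a ≤ b) (hε : ε ≤ ε')
    (h : abundancy ε' a ≤ abundancy ε' b) : abundancy ε a ≤ abundancy ε b := by
  rw [abundancy_eq_mul_rpow ha ε ε', abundancy_eq_mul_rpow (ha.trans_le hab) ε ε']
  exact mul_le_mul h (Real.rpow_le_rpow (by positivity) (by exact_mod_cast hab) (by linarith))
    (by positivity) (abundancy_pos (ha.trans_le hab) ε').le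

lemma abundancy_lt_of_lt_of_lt {a b : ℕ} {ε ε' : ℝ} (ha : 0 < a) (hab : a < b) (hε : ε < ε')
    (h : abundancy ε' a ≤ abundancy ε' b) : abundancy ε a < abundancy ε b := by
  rw [abundancy_eq_mul_rpow ha ε ε', abundancy_eq_mul_rpow (ha.trans hab) ε ε']
  exact mul_lt_mul' h (Real.rpow_lt_rpow (by positivity) (by exact_mod_cast hab) (by linarith))
    (by positivity) (abundancy_pos (ha.trans hab) ε')

theorem stmt4_general (N₀ N : ℕ) (ε₀ ε : ℝ)
    (hCA₀ : IsCA N₀ ε₀) (hNN₀ : N₀ < N)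
    (h : ∀ n : ℕ, N₀ ≤ n →
      (sigma' n : ℝ) / (n : ℝ) ^ (1 + ε) ≤ (sigma' N : ℝ) / (N : ℝ) ^ (1 + ε)) :
    IsCA N ε := by
  obtain ⟨hN₀, hCA⟩ := hCA₀
  have hεε₀ : ε ≤ ε₀ := le_of_not_gt fun hlt =>
    (hCA N (by omega)).not_gt (abundancy_lt_of_lt_of_lt hN₀ hNN₀ hlt (h N₀ le_rfl))
  refine ⟨by omega, fun n hn => ?_⟩
  rcases le_or_gt N₀ n with hge | hlt
  · exact h n hge
  · exact (abundancy_le_of_le_of_le (by omega) hlt.le hεε₀ (hCA n hn)).trans (h N₀ le_rfl)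

theorem stmt4 (N₀ N : ℕ) (ε₀ ε : ℝ) (hε₀ : 0 < ε₀) (hε : 0 < ε)
    (hCA₀ : IsCA N₀ ε₀) (hNN₀ : N₀ < N)
    (h : ∀ n : ℕ, N₀ ≤ n →
      (sigma' n : ℝ) / (n : ℝ) ^ (1 + ε) ≤ (sigma' N : ℝ) / (N : ℝ) ^ (1 + ε)) :
    IsCA N ε :=
  stmt4_general N₀ N ε₀ ε hCA₀ hNN₀ h
end

section
/- Let N be a colossally abundant number of parameter ε > 0 with largest prime factor p = P(N) ≥ 5. If ε > 1/(log(N/p)·log log(N/p)), then N is a GA1 number, i.e., G(N) ≥ G(N/q) for every prime factor q of N. -/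
open Real Filter

/-
Write `n = N / q`. The colossally abundant inequality at `n` gives `σ(n) q^{1+ε} ≤ σ(N)`, hence
`G(n) ≤ σ(N) / (N q^ε log log n)`, and it remains to see `log log N ≤ q^ε log log n`. Since
`log log (nq) ≤ log log n + log q / log n` and `q^ε ≥ 1 + ε log q`, this holds as soon as
`ε log n log log n ≥ 1`, which the hypothesis on `ε` gives because `n ≥ N / p`. The degenerate
cases `N / p ≤ 2` are `N = p`, where `G(N / p) = G(1) = 0`, and `N = 2p`, which the
colossally abundant inequality at `6` rules out.
-/

open scoped ArithmeticFunction.sigma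

lemma sigma'_eq_sigma_one (n : ℕ) : sigma' n = σ 1 n :=
  (ArithmeticFunction.sigma_one_apply n).symm

lemma sigma'_two_mul_prime {p : ℕ} (hp : p.Prime) (hp2 : p ≠ 2) :
    sigma' (2 * p) = 3 * (p + 1) := by
  have hcop : Nat.Coprime 2 p := (Nat.coprime_primes Nat.prime_two hp).mpr hp2.symm
  rw [sigma'_eq_sigma_one, ArithmeticFunction.isMultiplicative_sigma.map_mul_of_coprime hcop,
    ← pow_one 2, ← pow_one p, ArithmeticFunction.sigma_one_apply_prime_pow Nat.prime_two,
    ArithmeticFunction.sigma_one_apply_prime_pow hp]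
  simp [Finset.sum_range_succ, add_comm]

lemma G_eq_sigma'_div (n : ℕ) : G n = sigma' n / (n * log (log n)) := by
  simp [G, sigma']

lemma G_one : G 1 = 0 := by
  simp [G]

lemma one_lt_log_of_three_le {x : ℝ} (hx : 3 ≤ x) : 1 < log x := by
  rw [lt_log_iff_exp_lt (by linarith)]
  have := exp_one_lt_d9
  norm_num at this
  linarith

lemma log_mul_log_log_pos {x : ℝ} (hx : 3 ≤ x) : 0 < log x * log (log x) := by
  have := one_lt_log_of_three_le hx
  have := log_pos this
  positivity

lemma log_mul_log_log_le_of_le {a b : ℝ} (ha : 3 ≤ a) (hab : a ≤ b) :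
    log a * log (log a) ≤ log b * log (log b) := by
  have hloga := one_lt_log_of_three_le ha
  have hlogab : log a ≤ log b := log_le_log (by linarith) hab
  have := log_pos hloga
  gcongr
  linarith

lemma G_nonneg {n : ℕ} (hn : 3 ≤ n) : 0 ≤ G n := by
  rw [G_eq_sigma'_div]
  have := log_pos (one_lt_log_of_three_le (x := n) (by exact_mod_cast hn))
  positivity

lemma log_log_mul_le_rpow_mul_log_log {x q ε : ℝ} (hx : 3 ≤ x) (hq : 1 ≤ q)
    (hε : 1 ≤ ε * (log x * log (log x))) :
    log (log (x * q)) ≤ q ^ ε * log (log x) := by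
  have hlogx : 1 < log x := one_lt_log_of_three_le hx
  have hloglogx : 0 < log (log x) := log_pos hlogx
  have hlogq : 0 ≤ log q := log_nonneg hq
  have hsplit : log (x * q) = log x * (1 + log q / log x) := by
    rw [log_mul (by linarith) (by linarith)]
    field_simp
  have hlog_one_add : log (1 + log q / log x) ≤ log q / log x := by
    linarith [log_le_sub_one_of_pos (x := 1 + log q / log x) (by positivity)]
  have hratio : log q / log x ≤ ε * log q * log (log x) := by
    rw [div_le_iff₀ (by linarith)]
    nlinarith
  have hrpow : 1 + ε * log q ≤ q ^ ε := by
    rw [rpow_def_of_pos (by linarith), mul_comm (log q)]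
    linarith [add_one_le_exp (ε * log q)]
  calc log (log (x * q)) = log (log x) + log (1 + log q / log x) := by
        rw [hsplit, log_mul (by linarith) (by positivity)]
    _ ≤ (1 + ε * log q) * log (log x) := by nlinarith
    _ ≤ q ^ ε * log (log x) := by gcongr

namespace IsCA

variable {N : ℕ} {ε : ℝ}

lemma ne_two_mul_prime (hCA : IsCA N ε) (hε : 0 ≤ ε) {p : ℕ} (hp : p.Prime) (hp5 : 5 ≤ p) :
    N ≠ 2 * p := by
  rintro rfl
  have h6 := hCA.2 6 (by norm_num)
  rw [show sigma' 6 = 12 by decide, sigma'_two_mul_prime hp (by omega)] at h6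
  have hP : (5 : ℝ) ≤ p := by exact_mod_cast hp5
  have hsplit : ((2 * p : ℕ) : ℝ) ^ (1 + ε) = 6 ^ (1 + ε) * ((p : ℝ) / 3) ^ (1 + ε) := by
    rw [← mul_rpow (by norm_num) (by positivity)]
    push_cast
    ring_nf
  have hgrow : (p : ℝ) / 3 ≤ ((p : ℝ) / 3) ^ (1 + ε) := by
    simpa using
      rpow_le_rpow_of_exponent_le (x := (p : ℝ) / 3) (by linarith) (by linarith : 1 ≤ 1 + ε)
  rw [hsplit, div_le_div_iff₀ (by positivity) (by positivity)] at h6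
  push_cast at h6
  have h6pos : (0 : ℝ) < 6 ^ (1 + ε) := by positivity
  nlinarith

lemma sigma'_div_mul_rpow_le (hCA : IsCA N ε) {q : ℕ} (hqN : q ∣ N) (hq : 0 < q)
    (hn : 1 < N / q) : (sigma' (N / q) : ℝ) * (q : ℝ) ^ (1 + ε) ≤ sigma' N := by
  have hca := hCA.2 (N / q) hn
  have hxpos : (0 : ℝ) < ((N / q : ℕ) : ℝ) ^ (1 + ε) := by positivity
  rw [← Nat.div_mul_cancel hqN, Nat.cast_mul, mul_rpow (by positivity) (by positivity),
    Nat.div_mul_cancel hqN, div_le_div_iff₀ hxpos (by positivity)] at hca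
  nlinarith

lemma G_div_le (hCA : IsCA N ε) {q : ℕ} (hqN : q ∣ N) (hq : 1 ≤ q) (hn : 3 ≤ N / q)
    (hε : 1 ≤ ε * (log (N / q : ℕ) * log (log (N / q : ℕ)))) : G (N / q) ≤ G N := by
  have hx : (3 : ℝ) ≤ (N / q : ℕ) := by exact_mod_cast hn
  have hQ : (1 : ℝ) ≤ q := by exact_mod_cast hq
  have hNR : (N : ℝ) = (N / q : ℕ) * q := by rw [← Nat.cast_mul, Nat.div_mul_cancel hqN]
  have hsigma := hCA.sigma'_div_mul_rpow_le hqN hq (by omega)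
  have hloglog : log (log N) ≤ (q : ℝ) ^ ε * log (log (N / q : ℕ)) := by
    rw [hNR]
    exact log_log_mul_le_rpow_mul_log_log hx hQ hε
  have hloglogx : 0 < log (log (N / q : ℕ)) := log_pos (one_lt_log_of_three_le hx)
  have hN : (3 : ℝ) ≤ N := by nlinarith
  have hloglogN : 0 < log (log N) := log_pos (one_lt_log_of_three_le hN)
  calc G (N / q)
      = sigma' (N / q) * (q : ℝ) ^ (1 + ε) / (N * ((q : ℝ) ^ ε * log (log (N / q : ℕ)))) := by
        rw [G_eq_sigma'_div, rpow_add (by linarith), rpow_one, hNR]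
        field_simp
    _ ≤ sigma' N / (N * ((q : ℝ) ^ ε * log (log (N / q : ℕ)))) := by
        gcongr
    _ ≤ sigma' N / (N * log (log N)) := by
        have : (0 : ℝ) < N := by linarith
        gcongr
    _ = G N := (G_eq_sigma'_div N).symm

end IsCA

theorem stmt8 (N : ℕ) (ε : ℝ) (hε : 0 < ε) (hCA : IsCA N ε)
    (p : ℕ) (hp : p.Prime) (hpN : p ∣ N)
    (hmax : ∀ q : ℕ, q.Prime → q ∣ N → q ≤ p) (hp5 : 5 ≤ p)
    (hεbig : 1 / (Real.log (N / p) * Real.log (Real.log (N / p))) < ε) :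
    ∀ q : ℕ, q.Prime → q ∣ N → G (N / q) ≤ G N := by
  intro q hq hqN
  rcases eq_or_ne N p with rfl | hNp
  · rw [(Nat.prime_dvd_prime_iff_eq hq hp).mp hqN, Nat.div_self hp.pos, G_one]
    exact G_nonneg (by omega)
  have hNp3 : 3 ≤ N / p := by
    have hNe : p * (N / p) = N := Nat.mul_div_cancel' hpN
    have h0 : N / p ≠ 0 := fun h => by rw [h] at hNe; have := hCA.1; omega
    have h1 : N / p ≠ 1 := fun h => hNp (by rw [← hNe, h, mul_one])
    have h2 : N / p ≠ 2 := fun h => hCA.ne_two_mul_prime hε.le hp hp5 (by rw [← hNe, h, mul_comm])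
    generalize N / p = m at *
    omega
  have hNpq : N / p ≤ N / q := Nat.div_le_div_left (hmax q hq hqN) hq.pos
  refine hCA.G_div_le hqN hq.one_lt.le (hNp3.trans hNpq) ?_
  rw [← Nat.cast_div hpN (by exact_mod_cast hp.ne_zero),
    div_lt_iff₀ (log_mul_log_log_pos (by exact_mod_cast hNp3))] at hεbig
  calc (1 : ℝ) ≤ ε * (log (N / p : ℕ) * log (log (N / p : ℕ))) := by linarith
    _ ≤ ε * (log (N / q : ℕ) * log (log (N / q : ℕ))) :=
      mul_le_mul_of_nonneg_left
        (log_mul_log_log_le_of_le (by exact_mod_cast hNp3) (by exact_mod_cast hNpq)) hε.le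
end

section
/- If N is a GA1 number with Ω(N) ≥ 3 and p is a prime factor of N with r ≤ v_p(N), then p^r · log p ≤ log N · log log N. -/
open Real Filter

/-!
Write `N = p * m` and `v = v_p(N)`. Only the `p`-part of `σ` changes between `m` and `N`, and
`σ(p^v) / σ(p^(v-1)) ≤ p + p^(1-v)`, so the GA1 inequality `G(m) ≤ G(N)` gives
`p^v (log log N - log log m) ≤ log log m ≤ log log N`. Since
`log log N - log log m ≥ 1 - log m / log N = log p / log N`, this yields
`p^v log p ≤ log N log log N`. The hypothesis `Ω(N) ≥ 3` makes `m ≥ 3`, so that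
`log log m > 0` and the denominator of `G(m)` has the right sign.
-/

open ArithmeticFunction (sigma_pos sigma_one_apply sigma_one_apply_prime_pow isMultiplicative_sigma
  cardFactors_mul cardFactors_apply_prime)
open scoped ArithmeticFunction.sigma ArithmeticFunction.Omega

lemma sum_divisors_natCast_eq_sigma_one (n : ℕ) : ∑ d ∈ n.divisors, (d : ℝ) = σ 1 n := by
  rw [sigma_one_apply]; push_cast; rfl

lemma sigma_one_prime_pow_succ {p : ℕ} (hp : p.Prime) (k : ℕ) :
    σ 1 (p ^ (k + 1)) = p * σ 1 (p ^ k) + 1 := by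
  rw [sigma_one_apply_prime_pow hp, sigma_one_apply_prime_pow hp, geom_sum_succ]

lemma pow_mul_sigma_one_prime_pow_succ_le {p : ℕ} (hp : p.Prime) (k : ℕ) :
    p ^ k * σ 1 (p ^ (k + 1)) ≤ (p ^ (k + 1) + 1) * σ 1 (p ^ k) := by
  have hk : p ^ k ≤ σ 1 (p ^ k) := by
    rw [sigma_one_apply]
    exact Finset.single_le_sum (f := fun d => d) (fun _ _ => Nat.zero_le _)
      (Nat.mem_divisors_self _ (pow_ne_zero _ hp.ne_zero))
  rw [sigma_one_prime_pow_succ hp, pow_succ]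
  nlinarith

lemma pow_mul_sigma_one_le_mul_sigma_one_div {N p : ℕ} (hp : p.Prime) (hpN : p ∣ N)
    (hN : N ≠ 0) :
    p ^ (N.factorization p - 1) * σ 1 N ≤ (p ^ N.factorization p + 1) * σ 1 (N / p) := by
  obtain ⟨k, hk⟩ : ∃ k, N.factorization p = k + 1 :=
    Nat.exists_eq_add_one.mpr (hp.factorization_pos_of_dvd hN hpN)
  set M := N / p ^ N.factorization p
  have hcop : p.Coprime M := Nat.coprime_ordCompl hp hN
  have hN_eq : N = p ^ (k + 1) * M := by
    rw [← hk]; exact (Nat.ordProj_mul_ordCompl_eq_self N p).symm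
  have hm_eq : N / p = p ^ k * M := by
    rw [hN_eq, pow_succ, mul_right_comm, Nat.mul_div_cancel _ hp.pos]
  have hσN : σ 1 N = σ 1 (p ^ (k + 1)) * σ 1 M := by
    rw [hN_eq, isMultiplicative_sigma.map_mul_of_coprime (hcop.pow_left _)]
  rw [hk, Nat.add_sub_cancel, hσN, hm_eq,
    isMultiplicative_sigma.map_mul_of_coprime (hcop.pow_left _), ← mul_assoc, ← mul_assoc]
  exact Nat.mul_le_mul_right _ (pow_mul_sigma_one_prime_pow_succ_le hp k)

lemma three_le_div_of_three_le_cardFactors {N p : ℕ} (hN : 3 ≤ Ω N) (hp : p.Prime)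
    (hpN : p ∣ N) : 3 ≤ N / p := by
  have hN0 : N ≠ 0 := by rintro rfl; simp at hN
  have hm : 2 ≤ Ω (N / p) := by
    have := cardFactors_mul hp.ne_zero (Nat.div_ne_zero_iff_of_dvd hpN |>.mpr ⟨hN0, hp.ne_zero⟩)
    rw [Nat.mul_div_cancel' hpN, cardFactors_apply_prime hp] at this
    omega
  by_contra! h
  interval_cases h : N / p <;> simp [cardFactors_apply_prime Nat.prime_two] at hm

lemma sub_div_le_log_sub_log {x y : ℝ} (hx : 0 < x) (hy : 0 < y) :
    (x - y) / x ≤ log x - log y := by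
  have := one_sub_inv_le_log_of_pos (div_pos hx hy)
  rwa [inv_div, log_div hx.ne' hy.ne', one_sub_div hx.ne'] at this

lemma one_lt_log_of_three_le_s11 {n : ℕ} (hn : 3 ≤ n) : 1 < log n := by
  have h3 : (3 : ℝ) ≤ n := by exact_mod_cast hn
  rw [lt_log_iff_exp_lt (by positivity)]
  exact exp_one_lt_d9.trans_le (by linarith)

lemma IsGA1.pow_mul_log_log_le {N p : ℕ} (hN : IsGA1 N) (hp : p.Prime) (hpN : p ∣ N)
    (hm : 3 ≤ N / p) :
    (p : ℝ) ^ N.factorization p * log (log N) ≤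
      ((p : ℝ) ^ N.factorization p + 1) * log (log (N / p : ℕ)) := by
  obtain ⟨hN1, -, hG⟩ := hN
  have hGm := hG p hp hpN
  simp only [G, sum_divisors_natCast_eq_sigma_one] at hGm
  set m := N / p
  set v := N.factorization p
  have hv : (p : ℝ) ^ v = p * (p : ℝ) ^ (v - 1) := by
    rw [← pow_succ', Nat.sub_add_cancel (hp.factorization_pos_of_dvd (by omega) hpN)]
  have hNm : (N : ℝ) = p * m := by exact_mod_cast (Nat.mul_div_cancel' hpN).symm
  have hσ : (p : ℝ) ^ (v - 1) * σ 1 N ≤ ((p : ℝ) ^ v + 1) * σ 1 m := by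
    exact_mod_cast pow_mul_sigma_one_le_mul_sigma_one_div hp hpN (by omega)
  have hp0 : (0 : ℝ) < p := by exact_mod_cast hp.pos
  have hm0 : (0 : ℝ) < m := by positivity
  have hσm : (0 : ℝ) < σ 1 m := by exact_mod_cast sigma_pos 1 m (by omega)
  have hlogm : 1 < log m := one_lt_log_of_three_le_s11 hm
  have hlogN : log m ≤ log N := log_le_log hm0 (by exact_mod_cast Nat.div_le_self N p)
  have hLLm : 0 < log (log m) := log_pos hlogm
  have hLLN : 0 < log (log N) := log_pos (hlogm.trans_le hlogN)
  rw [div_le_div_iff₀ (by positivity) (by positivity)] at hGm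
  refine le_of_mul_le_mul_right ?_ (mul_pos hσm hm0)
  calc (p : ℝ) ^ v * log (log N) * (σ 1 m * m)
      = (p : ℝ) ^ (v - 1) * (σ 1 m * (N * log (log N))) := by rw [hv, hNm]; ring
    _ ≤ (p : ℝ) ^ (v - 1) * (σ 1 N * (m * log (log m))) := by gcongr
    _ = (p : ℝ) ^ (v - 1) * σ 1 N * (m * log (log m)) := by ring
    _ ≤ ((p : ℝ) ^ v + 1) * σ 1 m * (m * log (log m)) := by gcongr
    _ = ((p : ℝ) ^ v + 1) * log (log m) * (σ 1 m * m) := by ring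

theorem stmt11_general (N : ℕ) (hGA1 : IsGA1 N) (hΩ : 3 ≤ (ArithmeticFunction.cardFactors N))
    (p : ℕ) (hp : p.Prime) (hpN : p ∣ N)
    (r : ℕ) (hrv : r ≤ N.factorization p) :
    (p : ℝ) ^ r * Real.log p ≤ Real.log N * Real.log (Real.log N) := by
  have hm : 3 ≤ N / p := three_le_div_of_three_le_cardFactors hΩ hp hpN
  have hGA := hGA1.pow_mul_log_log_le hp hpN hm
  set m := N / p
  set v := N.factorization p
  have hlogm : 1 < log m := one_lt_log_of_three_le_s11 hm
  have hlogN : log N = log p + log m := by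
    rw [← log_mul (by exact_mod_cast hp.ne_zero) (by positivity), ← Nat.cast_mul,
      Nat.mul_div_cancel' hpN]
  have hlogp : 0 < log p := log_pos (by exact_mod_cast hp.one_lt)
  have hlogN0 : 0 < log N := by linarith
  have hLL : log (log m) ≤ log (log N) := log_le_log (by linarith) (by linarith)
  have hgap : log p / log N ≤ log (log N) - log (log m) := by
    convert sub_div_le_log_sub_log (x := log N) (y := log m) hlogN0 (by linarith) using 2
    linarith
  calc (p : ℝ) ^ r * log p
      ≤ (p : ℝ) ^ v * log p := by gcongr; exact_mod_cast hp.one_le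
    _ = (p : ℝ) ^ v * (log p / log N) * log N := by field_simp [hlogN0.ne']
    _ ≤ (p : ℝ) ^ v * (log (log N) - log (log m)) * log N := by gcongr
    _ ≤ log (log m) * log N := by gcongr; linarith
    _ ≤ log (log N) * log N := by gcongr
    _ = log N * log (log N) := mul_comm _ _

theorem stmt11 (N : ℕ) (hGA1 : IsGA1 N) (hΩ : 3 ≤ (ArithmeticFunction.cardFactors N))
    (p : ℕ) (hp : p.Prime) (hpN : p ∣ N)
    (r : ℕ) (hr : 1 ≤ r) (hrv : r ≤ N.factorization p) :
    (p : ℝ) ^ r * Real.log p ≤ Real.log N * Real.log (Real.log N) :=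
  stmt11_general N hGA1 hΩ p hp hpN r hrv
end

section
/- Let n be a positive integer with Ω(n) ≥ 3, and let q < p be primes dividing n with v_q(n) ≤ v_p(n). Then G(n/q) < G(n/p). -/
/-! Removing one factor q from n gives σ(n/q)/(n/q) = σ(n)/n · (1 − 1/(1 + q + ⋯ + q^{v_q(n)})).
Since q < p and v_q(n) ≤ v_p(n), this geometric sum is smaller for q than for p, so
σ(n/q)/(n/q) < σ(n/p)/(n/p). Because Ω(n/p) ≥ 2 we have n/q ≥ n/p ≥ 3 > e, so
0 < log log(n/p) ≤ log log(n/q), and dividing by these keeps the strict inequality. -/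

open Real Filter

open Finset ArithmeticFunction
open scoped ArithmeticFunction.Omega ArithmeticFunction.sigma

lemma sigma_one_div_prime_mul_geom_sum {n q : ℕ} (hq : q.Prime) (hn : n ≠ 0) (hqn : q ∣ n) :
    σ 1 (n / q) * ∑ i ∈ range (n.factorization q + 1), q ^ i
      = σ 1 n * ∑ i ∈ range (n.factorization q), q ^ i := by
  obtain ⟨a, ha⟩ : ∃ a, n.factorization q = a + 1 :=
    Nat.exists_eq_add_one.mpr ((hq.dvd_iff_one_le_factorization hn).mp hqn)
  set m := n / q ^ n.factorization q
  have hcop : q.Coprime m := Nat.coprime_ordCompl hq hn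
  have hn_eq : n = q ^ (a + 1) * m := by
    rw [← ha]
    exact (Nat.ordProj_mul_ordCompl_eq_self n q).symm
  have hnq_eq : n / q = q ^ a * m := by
    rw [hn_eq, pow_succ', mul_assoc, Nat.mul_div_cancel_left _ hq.pos]
  rw [hnq_eq, ha, isMultiplicative_sigma.map_mul_of_coprime (hcop.pow_left a)]
  conv_rhs => rw [hn_eq]
  rw [isMultiplicative_sigma.map_mul_of_coprime (hcop.pow_left _),
    sigma_one_apply_prime_pow hq, sigma_one_apply_prime_pow hq]
  ring

lemma sigma_div_prime_div_eq_mul_one_sub {n q : ℕ} (hq : q.Prime) (hn : n ≠ 0) (hqn : q ∣ n) :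
    (σ 1 (n / q) : ℝ) / (n / q : ℕ)
      = σ 1 n / n * (1 - 1 / ∑ i ∈ range (n.factorization q + 1), (q : ℝ) ^ i) := by
  have key := congrArg (Nat.cast (R := ℝ)) (sigma_one_div_prime_mul_geom_sum hq hn hqn)
  push_cast at key
  rw [geom_sum_succ] at key ⊢
  have hq0 : (q : ℝ) ≠ 0 := by exact_mod_cast hq.ne_zero
  have hn0 : (n : ℝ) ≠ 0 := by exact_mod_cast hn
  have hA : (q : ℝ) * ∑ i ∈ range (n.factorization q), (q : ℝ) ^ i + 1 ≠ 0 := by positivity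
  rw [Nat.cast_div hqn hq0]
  field_simp
  linear_combination (q : ℝ) * key

lemma geom_sum_lt_geom_sum {R : Type*} [Semiring R] [LinearOrder R] [IsStrictOrderedRing R]
    {x y : R} {a b : ℕ} (hx : 0 ≤ x) (hxy : x < y) (ha : 0 < a) (hab : a ≤ b) :
    ∑ i ∈ range (a + 1), x ^ i < ∑ i ∈ range (b + 1), y ^ i :=
  calc ∑ i ∈ range (a + 1), x ^ i
      < ∑ i ∈ range (a + 1), y ^ i := by
        apply sum_lt_sum (fun i _ => by gcongr)
        exact ⟨1, by simp [ha], by simpa using hxy⟩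
    _ ≤ ∑ i ∈ range (b + 1), y ^ i :=
        sum_le_sum_of_subset_of_nonneg (range_subset_range.mpr (by omega))
          (fun _ _ _ => pow_nonneg (hx.trans hxy.le) _)

lemma three_le_of_two_le_cardFactors {m : ℕ} (h : 2 ≤ Ω m) : 3 ≤ m := by
  by_contra! hm
  interval_cases m <;> simp [cardFactors_apply_prime Nat.prime_two] at h

lemma two_le_cardFactors_div_prime {n p : ℕ} (hΩ : 3 ≤ Ω n) (hp : p.Prime) (hpn : p ∣ n) :
    2 ≤ Ω (n / p) := by
  have hn : n ≠ 0 := by rintro rfl; simp at hΩ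
  have hnp : n / p ≠ 0 := (Nat.div_ne_zero_iff_of_dvd hpn).mpr ⟨hn, hp.ne_zero⟩
  have := cardFactors_mul hp.ne_zero hnp
  rw [Nat.mul_div_cancel' hpn, cardFactors_apply_prime hp] at this
  omega

lemma log_log_pos_of_three_le {x : ℝ} (hx : 3 ≤ x) : 0 < Real.log (Real.log x) := by
  apply Real.log_pos
  rw [Real.lt_log_iff_exp_lt (by linarith)]
  linarith [Real.exp_one_lt_three]

lemma G_eq_sigma_div (m : ℕ) : G m = (σ 1 m : ℝ) / m / Real.log (Real.log m) := by
  rw [G, sigma_one_apply, div_div]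
  push_cast
  rfl

theorem stmt14 (n : ℕ) (hΩ : 3 ≤ (ArithmeticFunction.cardFactors n))
    (q p : ℕ) (hq : q.Prime) (hp : p.Prime) (hqp : q < p)
    (hqn : q ∣ n) (hpn : p ∣ n)
    (hv : n.factorization q ≤ n.factorization p) :
    G (n / q) < G (n / p) := by
  have hn : n ≠ 0 := by rintro rfl; simp at hΩ
  have hσn : 0 < σ 1 n := sigma_pos 1 n hn
  have hratio : (σ 1 (n / q) : ℝ) / (n / q : ℕ) < σ 1 (n / p) / (n / p : ℕ) := by
    rw [sigma_div_prime_div_eq_mul_one_sub hq hn hqn, sigma_div_prime_div_eq_mul_one_sub hp hn hpn]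
    gcongr
    · exact geom_sum_pos (Nat.cast_nonneg q) (Nat.succ_ne_zero _)
    · exact geom_sum_lt_geom_sum (Nat.cast_nonneg q) (by exact_mod_cast hqp)
        ((hq.dvd_iff_one_le_factorization hn).mp hqn) hv
  have hnp : (3 : ℝ) ≤ (n / p : ℕ) := by
    exact_mod_cast three_le_of_two_le_cardFactors (two_le_cardFactors_div_prime hΩ hp hpn)
  have hnpq : ((n / p : ℕ) : ℝ) ≤ (n / q : ℕ) := by
    exact_mod_cast Nat.div_le_div_left hqp.le hq.pos
  have hlog : 0 < Real.log (Real.log (n / p : ℕ)) := log_log_pos_of_three_le hnp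
  have hlog_le : Real.log (Real.log (n / p : ℕ)) ≤ Real.log (Real.log (n / q : ℕ)) := by
    gcongr
    exact Real.log_pos (by linarith)
  rw [G_eq_sigma_div, G_eq_sigma_div]
  calc (σ 1 (n / q) : ℝ) / (n / q : ℕ) / Real.log (Real.log (n / q : ℕ))
      ≤ (σ 1 (n / q) : ℝ) / (n / q : ℕ) / Real.log (Real.log (n / p : ℕ)) := by gcongr
    _ < σ 1 (n / p) / (n / p : ℕ) / Real.log (Real.log (n / p : ℕ)) := by gcongr
end

section
/- If N is a GA1 number with Ω(N) ≥ 3 and p = P(N) is its largest prime factor, then v_p(N) = 1. -/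
open Real Filter

/-!
Write `L = log N`. Clearing denominators in `G (N / q) ≤ G N` and using the concavity of `log`
gives, for every prime `q ∣ N`, `(q ^ (v_q + 1) - 1) log q ≤ (q - 1) L log L`. For `q = p` and
`v_p(N) ≥ 2` this reads `(p² + p + 1) log p ≤ L log L`, so `L` is large in terms of `p`. For every
`q` it gives `q ^ v_q ≤ 2 L log L`, and since at most `(p + 1) / 2` primes divide `N`,
`L ≤ ((p + 1) / 2) log (2 L log L)`, so `L` is small in terms of `p`. An explicit threshold
(`p² / 2` for `p ≥ 7`, numerical values for `p = 2, 3, 5`) separates the two bounds.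
-/

open Finset
open scoped ArithmeticFunction.Omega

theorem ArithmeticFunction.two_pow_cardFactors_le {n : ℕ} (hn : n ≠ 0) : 2 ^ Ω n ≤ n :=
  calc 2 ^ Ω n ≤ n.primeFactorsList.prod :=
        List.pow_card_le_prod _ _ fun _ hq ↦ (Nat.prime_of_mem_primeFactorsList hq).two_le
    _ = n := Nat.prod_primeFactorsList hn

theorem one_lt_log_of_two_le_cardFactors {n : ℕ} (h : 2 ≤ Ω n) :
    1 < log n := by
  have hn0 : n ≠ 0 := by rintro rfl; simp at h
  have hn4 : (4 : ℝ) ≤ n := by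
    exact_mod_cast (Nat.pow_le_pow_right two_pos h).trans
      (ArithmeticFunction.two_pow_cardFactors_le hn0)
  rw [lt_log_iff_exp_lt (by linarith)]
  linarith [exp_one_lt_d9]

theorem sum_divisors_prime_mul_mul_eq {q n : ℕ} (hq : q.Prime) (hn : n ≠ 0) :
    (∑ d ∈ (q * n).divisors, (d : ℝ)) * ((q : ℝ) ^ (n.factorization q + 1) - 1) =
      (∑ d ∈ n.divisors, (d : ℝ)) * ((q : ℝ) ^ (n.factorization q + 1 + 1) - 1) := by
  set w := n.factorization q
  set m := n / q ^ w
  have hcop : ∀ j, (q ^ j).Coprime m := fun j ↦ (Nat.coprime_ordCompl hq hn).pow_left j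
  have hn' : n = q ^ w * m := (Nat.ordProj_mul_ordCompl_eq_self n q).symm
  have hqn : q * n = q ^ (w + 1) * m := by rw [hn', pow_succ]; ring
  have hsum : ∀ j, ∑ d ∈ (q ^ j * m).divisors, (d : ℝ) =
      (∑ i ∈ range (j + 1), (q : ℝ) ^ i) * ∑ d ∈ m.divisors, (d : ℝ) := by
    intro j
    rw [← Nat.cast_sum, Nat.Coprime.sum_divisors_mul (hcop j), Nat.sum_divisors_prime_pow hq]
    push_cast; rfl
  have hq1 : (q : ℝ) - 1 ≠ 0 := sub_ne_zero.2 (by exact_mod_cast hq.one_lt.ne')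
  have hgeom : ∀ j, (∑ i ∈ range j, (q : ℝ) ^ i) * (q - 1) = (q : ℝ) ^ j - 1 :=
    fun j ↦ geom_sum_mul _ j
  rw [hqn, hsum]
  conv_rhs => rw [hn', hsum]
  apply mul_right_cancel₀ hq1
  linear_combination (∑ d ∈ m.divisors, (d : ℝ)) *
    (((q : ℝ) ^ (w + 1) - 1) * hgeom (w + 1 + 1) - ((q : ℝ) ^ (w + 1 + 1) - 1) * hgeom (w + 1))

theorem Real.log_sub_le {a b : ℝ} (ha : 0 < a) (hab : b < a) : log (a - b) ≤ log a - b / a := by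
  have h := log_le_sub_one_of_pos (div_pos (sub_pos.2 hab) ha)
  rw [log_div (sub_pos.2 hab).ne' ha.ne', sub_div, div_self ha.ne'] at h
  linarith

theorem mul_log_log_mul_sum_divisors_le_of_G_le {q n : ℕ} (hq : 0 < q) (hn : 1 < log n)
    (h : G n ≤ G (q * n)) :
    q * log (log (q * n)) * ∑ d ∈ n.divisors, (d : ℝ) ≤
      log (log n) * ∑ d ∈ (q * n).divisors, (d : ℝ) := by
  have hq1 : (1 : ℝ) ≤ q := by exact_mod_cast hq
  have hn0 : (0 : ℝ) < n := Nat.cast_pos.2 (Nat.pos_of_ne_zero (by rintro rfl; norm_num at hn))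
  have hqn : log n ≤ log (q * n) := log_le_log hn0 (by nlinarith)
  unfold G at h
  push_cast at h
  rw [div_le_div_iff₀ (by have := log_pos hn; positivity)
    (by have := log_pos (hn.trans_le hqn); positivity)] at h
  refine le_of_mul_le_mul_right ?_ hn0
  linarith

theorem IsGA1.pow_succ_sub_one_mul_log_le {N q : ℕ} (hN : IsGA1 N) (hΩ : 3 ≤ Ω N)
    (hq : q.Prime) (hqN : q ∣ N) :
    ((q : ℝ) ^ (N.factorization q + 1) - 1) * log q ≤ (q - 1) * (log N * log (log N)) := by
  obtain ⟨n, rfl⟩ := hqN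
  have hn0 : n ≠ 0 := by rintro rfl; simp [IsGA1] at hN
  rw [ArithmeticFunction.cardFactors_mul hq.ne_zero hn0,
    ArithmeticFunction.cardFactors_apply_prime hq] at hΩ
  have hlogn := one_lt_log_of_two_le_cardFactors (by omega : 2 ≤ Ω n)
  have hq2 : (2 : ℝ) ≤ q := by exact_mod_cast hq.two_le
  have hlogq : 0 < log q := log_pos (by linarith)
  have hG := hN.2.2 q hq (dvd_mul_right q n)
  rw [Nat.mul_div_cancel_left n hq.pos] at hG
  have hGA := mul_log_log_mul_sum_divisors_le_of_G_le hq.pos hlogn hG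
  have hσ := sum_divisors_prime_mul_mul_eq hq hn0
  rw [Nat.factorization_mul hq.ne_zero hn0, Finsupp.add_apply, hq.factorization_self,
    add_comm 1, Nat.cast_mul]
  rw [log_mul (by positivity) (by positivity)] at hGA ⊢
  set S := ∑ d ∈ n.divisors, (d : ℝ)
  set T := ∑ d ∈ (q * n).divisors, (d : ℝ)
  set L := log q + log n
  set A : ℝ := (q : ℝ) ^ (n.factorization q + 1) - 1
  set B : ℝ := (q : ℝ) ^ (n.factorization q + 1 + 1) - 1
  have hS : 0 < S := sum_pos (fun d hd ↦ by exact_mod_cast Nat.pos_of_mem_divisors hd)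
    (Nat.nonempty_divisors.2 hn0)
  have hA : 0 ≤ A := sub_nonneg.2 (one_le_pow₀ (by linarith))
  have hBA : B = q * A + (q - 1) := by ring
  have hloglog : log (log n) ≤ log L - log q / L := by
    have : log n = L - log q := by ring
    rw [this]; exact log_sub_le (by linarith) (by linarith)
  have h1 : q * A * log L ≤ B * log (log n) := by
    refine le_of_mul_le_mul_left ?_ hS
    calc S * (q * A * log L) = q * log L * S * A := by ring
      _ ≤ log (log n) * T * A := mul_le_mul_of_nonneg_right hGA hA
      _ = S * (B * log (log n)) := by rw [mul_assoc, hσ]; ring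
  have h2 : B * (log q / L) ≤ (q - 1) * log L := by
    have := mul_le_mul_of_nonneg_left hloglog (show 0 ≤ B by rw [hBA]; nlinarith)
    calc B * (log q / L) = B * log L - B * (log L - log q / L) := by ring
      _ ≤ B * log L - q * A * log L := by linarith
      _ = (q - 1) * log L := by rw [hBA]; ring
  rw [mul_div_assoc', div_le_iff₀ (by linarith)] at h2
  linarith

theorem pow_le_two_mul_of_pow_succ_sub_one_mul_log_le {q u : ℝ} {v : ℕ} (hq : 2 ≤ q)
    (hu : 1 / 2 ≤ u) (h : (q ^ (v + 1) - 1) * log q ≤ (q - 1) * u) : q ^ v ≤ 2 * u := by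
  have hlogq : 1 / 2 < log q := by
    linarith [log_two_gt_d9, log_le_log two_pos hq]
  by_contra! hlt
  have hpow : 2 * q * u < q ^ (v + 1) := by rw [pow_succ]; nlinarith
  have hhalf : (q ^ (v + 1) - 1) * (1 / 2) ≤ (q ^ (v + 1) - 1) * log q :=
    mul_le_mul_of_nonneg_left hlogq.le (by nlinarith)
  nlinarith

theorem log_le_card_primeFactors_mul_log {n : ℕ} {B : ℝ}
    (h : ∀ q ∈ n.primeFactors, (q : ℝ) ^ n.factorization q ≤ B) :
    log n ≤ #n.primeFactors * log B := by
  rw [log_nat_eq_sum_factorization, Finsupp.sum, Nat.support_factorization, ← nsmul_eq_mul]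
  refine sum_le_card_nsmul _ _ _ fun q hq ↦ ?_
  have hq0 : (0 : ℝ) < q := by exact_mod_cast (Nat.prime_of_mem_primeFactors hq).pos
  rw [← log_pow]
  exact log_le_log (by positivity) (h q hq)

theorem card_primeFactors_le_succ_div_two {n p : ℕ} (h : ∀ q ∈ n.primeFactors, q ≤ p) :
    #n.primeFactors ≤ (p + 1) / 2 := by
  -- `q ↦ (q + 1) / 2` is injective on primes: only `2` is even
  have := card_le_card_of_injOn (fun q ↦ (q + 1) / 2) (s := n.primeFactors)
    (t := Icc 1 ((p + 1) / 2))
    (fun q hq ↦ by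
      have := (Nat.prime_of_mem_primeFactors hq).two_le
      have := h q hq
      simp only [coe_Icc, Set.mem_Icc]; omega)
    (fun q₁ hq₁ q₂ hq₂ heq ↦ by
      have h₁ := Nat.prime_of_mem_primeFactors hq₁
      have h₂ := Nat.prime_of_mem_primeFactors hq₂
      have := h₁.two_le
      have := h₂.two_le
      simp only at heq
      rcases h₁.eq_two_or_odd' with rfl | ⟨k, rfl⟩ <;>
        rcases h₂.eq_two_or_odd' with rfl | ⟨j, rfl⟩ <;> omega)
  simpa using this

-- With `x = c t`, `t ≥ 1`: `x log x ≤ t² c log c`, so the right side of `hx` exceeds its value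
-- at `c` by at most `2 k (t - 1) ≤ c (t - 1)`, while `x` exceeds `c` by `c (t - 1)`.
theorem lt_of_le_mul_log_mul_mul_log {a k c x : ℝ} (ha : 0 < a) (hk : 0 ≤ k)
    (hc : exp 1 ≤ c) (hkc : 2 * k ≤ c) (hck : k * log (a * (c * log c)) < c)
    (hx : x ≤ k * log (a * (x * log x))) : x < c := by
  by_contra! hcx
  have hc0 : 0 < c := (exp_pos 1).trans_le hc
  have hlogc : 1 ≤ log c := (le_log_iff_exp_le hc0).2 hc
  set t := x / c with ht_def
  have hxt : x = c * t := by rw [ht_def]; field_simp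
  have ht : 1 ≤ t := (one_le_div hc0).2 hcx
  have hlogt : log t ≤ t - 1 := log_le_sub_one_of_pos (by linarith)
  have hxlog : x * log x ≤ t ^ 2 * (c * log c) := by
    rw [hxt, log_mul hc0.ne' (by positivity)]
    have : log t ≤ (t - 1) * log c := hlogt.trans (by nlinarith)
    have hct : 0 ≤ c * t := by positivity
    nlinarith [mul_le_mul_of_nonneg_left this hct]
  have hlog : log (a * (x * log x)) ≤ log (a * (c * log c)) + 2 * (t - 1) := by
    have hpos : 0 < a * (x * log x) :=
      mul_pos ha (mul_pos (by linarith) (by linarith [log_le_log hc0 hcx]))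
    calc log (a * (x * log x)) ≤ log (t ^ 2 * (a * (c * log c))) :=
          log_le_log hpos (by nlinarith)
      _ = log (a * (c * log c)) + 2 * log t := by
          rw [log_mul (by positivity) (by positivity), log_pow]; push_cast; ring
      _ ≤ _ := by linarith
  nlinarith [mul_le_mul_of_nonneg_left hlog hk]

theorem two_point_seven_pow_le_exp (n : ℕ) : (2.7 : ℝ) ^ n ≤ exp n := by
  rw [← exp_one_pow]
  exact pow_le_pow_left₀ (by norm_num) (exp_one_gt_d9.trans' (by norm_num)).le n

-- Such a `c` separates the two constraints on `x = log N`: `(p² + p + 1) log p ≤ x log x` forces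
-- `c ≤ x`, while `x ≤ ((p + 1) / 2) log (2 x log x)` forces `x < c`.
def IsThreshold (p : ℕ) (c : ℝ) : Prop :=
  exp 1 ≤ c ∧ 2 * ((p + 1) / 2 : ℕ) ≤ c ∧ ((p + 1) / 2 : ℕ) * log (2 * (c * log c)) < c ∧
    c * log c ≤ ((p : ℝ) ^ 2 + p + 1) * log p

theorem isThreshold_of_numerals {p c l : ℕ} (hc : 3 ≤ c) (hkc : 2 * ((p + 1) / 2) ≤ c)
    (hcl : (c : ℝ) < 2.7 ^ l) (hck : (2 * c * l : ℝ) ^ ((p + 1) / 2) < 2.7 ^ c)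
    (hcp : c ^ c ≤ p ^ (p ^ 2 + p + 1)) : IsThreshold p c := by
  have hc3 : (3 : ℝ) ≤ c := by exact_mod_cast hc
  have hlogc : 0 < log c := log_pos (by linarith)
  refine ⟨exp_one_lt_d9.le.trans (by linarith), by exact_mod_cast hkc, ?_, ?_⟩
  · have hlogl : log c < l :=
      (log_lt_iff_lt_exp (by positivity)).2 (hcl.trans_le (two_point_seven_pow_le_exp l))
    rw [← log_pow, log_lt_iff_lt_exp (by positivity)]
    calc (2 * (c * log c)) ^ ((p + 1) / 2) ≤ (2 * c * l : ℝ) ^ ((p + 1) / 2) :=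
          pow_le_pow_left₀ (by positivity) (by nlinarith) _
      _ < exp c := hck.trans_le (two_point_seven_pow_le_exp c)
  · have : ((p : ℝ) ^ 2 + p + 1) = ((p ^ 2 + p + 1 : ℕ) : ℝ) := by push_cast; ring
    rw [this, ← log_pow, ← log_pow]
    exact log_le_log (by positivity) (by exact_mod_cast hcp)

theorem isThreshold_sq_div_two {p : ℕ} (hp : 7 ≤ p) : IsThreshold p ((p : ℝ) ^ 2 / 2) := by
  have hP : (7 : ℝ) ≤ p := by exact_mod_cast hp
  have hK : (((p + 1) / 2 : ℕ) : ℝ) ≤ (p + 1) / 2 := by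
    rw [le_div_iff₀ two_pos]; exact_mod_cast Nat.div_mul_le_self (p + 1) 2
  have hlog7 : log 7 < 2 := by
    rw [log_lt_iff_lt_exp (by norm_num)]
    exact (two_point_seven_pow_le_exp 2).trans_lt' (by norm_num)
  -- tangent line of `log` at `7`
  have hlogp : log p < 1 + p / 7 := by
    have := log_le_sub_one_of_pos (show (0 : ℝ) < p / 7 by positivity)
    rw [log_div (by positivity) (by norm_num)] at this
    linarith
  have hlogp0 : 0 < log p := log_pos (by linarith)
  set c : ℝ := (p : ℝ) ^ 2 / 2 with hc_def
  have hc24 : 24 ≤ c := by nlinarith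
  have hexp : exp 1 ≤ c := by linarith [exp_one_lt_d9]
  have hlogc : 1 ≤ log c := (le_log_iff_exp_le (by positivity)).2 hexp
  have hc1 : 1 < c := by linarith
  have hc : c * log c ≤ (p : ℝ) ^ 2 * log p := by
    have : log c ≤ 2 * log p := by
      calc log c ≤ log ((p : ℝ) ^ 2) :=
            log_le_log (by positivity) (by linarith [sq_nonneg (p : ℝ)])
        _ = 2 * log p := by rw [log_pow]; norm_num
    nlinarith [log_pos hc1]
  have hlogcc : log (2 * (c * log c)) ≤ 3 * log p := by
    calc log (2 * (c * log c)) ≤ log ((p : ℝ) ^ 3) :=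
          log_le_log (by have := log_pos hc1; positivity) (by nlinarith)
      _ = 3 * log p := by rw [log_pow]; norm_num
  have hlogcc0 : 0 ≤ log (2 * (c * log c)) := by
    apply log_nonneg
    nlinarith
  refine ⟨hexp, by nlinarith, ?_, by nlinarith⟩
  calc ((p + 1) / 2 : ℕ) * log (2 * (c * log c)) ≤ (p + 1) / 2 * (3 * log p) :=
        mul_le_mul hK hlogcc hlogcc0 (by positivity)
    _ < c := by nlinarith

theorem exists_isThreshold {p : ℕ} (hp : p.Prime) : ∃ c, IsThreshold p c := by
  obtain rfl | rfl | rfl | hp7 : p = 2 ∨ p = 3 ∨ p = 5 ∨ 7 ≤ p := by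
    rcases lt_or_ge p 7 with h7 | h7
    · have := hp.two_le
      interval_cases p <;> revert hp <;> decide
    · omega
  · exact ⟨_, isThreshold_of_numerals (c := 3) (l := 2)
      (by norm_num) (by norm_num) (by norm_num) (by norm_num) (by norm_num)⟩
  · exact ⟨_, isThreshold_of_numerals (c := 7) (l := 2)
      (by norm_num) (by norm_num) (by norm_num) (by norm_num) (by norm_num)⟩
  · exact ⟨_, isThreshold_of_numerals (c := 17) (l := 3)
      (by norm_num) (by norm_num) (by norm_num) (by norm_num) (by norm_num)⟩
  · exact ⟨_, isThreshold_sq_div_two hp7⟩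

theorem succ_div_two_mul_log_lt_of_le_mul_log {p : ℕ} (hp : p.Prime) {x : ℝ} (hx : 0 < x)
    (h : ((p : ℝ) ^ 2 + p + 1) * log p ≤ x * log x) :
    ((p + 1) / 2 : ℕ) * log (2 * (x * log x)) < x := by
  obtain ⟨c, hc, hkc, hck, hcp⟩ := exists_isThreshold hp
  by_contra! hle
  have hxc := lt_of_le_mul_log_mul_mul_log two_pos (Nat.cast_nonneg _) hc hkc hck hle
  have hc0 : 0 < c := hx.trans hxc
  have hlogc : 0 < log c := (log_pos_iff hc0.le).2 (by linarith [add_one_le_exp 1])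
  have : x * log x < c * log c :=
    calc x * log x ≤ x * log c := mul_le_mul_of_nonneg_left (log_le_log hx hxc.le) hx.le
      _ < c * log c := mul_lt_mul_of_pos_right hxc hlogc
  linarith

theorem stmt16 (N : ℕ) (hGA1 : IsGA1 N) (hΩ : 3 ≤ (ArithmeticFunction.cardFactors N))
    (p : ℕ) (hp : p.Prime) (hpN : p ∣ N)
    (hmax : ∀ q : ℕ, q.Prime → q ∣ N → q ≤ p) :
    N.factorization p = 1 := by
  by_contra hne
  have hN0 : N ≠ 0 := by have := hGA1.1; omega
  have hv : 2 ≤ N.factorization p := by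
    have := hp.factorization_pos_of_dvd hN0 hpN; omega
  have hP : (2 : ℝ) ≤ p := by exact_mod_cast hp.two_le
  have hlogp : 1 / 2 < log p := by linarith [log_two_gt_d9, log_le_log two_pos hP]
  set u := log N * log (log N)
  have hstar {q : ℕ} (hq : q.Prime) (hqN : q ∣ N) :=
    hGA1.pow_succ_sub_one_mul_log_le hΩ hq hqN
  have hpu : ((p : ℝ) ^ 2 + p + 1) * log p ≤ u := by
    have hp3 : (p : ℝ) ^ 3 ≤ (p : ℝ) ^ (N.factorization p + 1) :=
      pow_le_pow_right₀ (by linarith) (by omega)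
    refine le_of_mul_le_mul_left ((hstar hp hpN).trans' ?_) (by linarith : (0 : ℝ) < p - 1)
    nlinarith
  have hu : 1 / 2 ≤ u := by nlinarith
  have hlogN : log N ≤ ((p + 1) / 2 : ℕ) * log (2 * u) := by
    refine (log_le_card_primeFactors_mul_log (B := 2 * u) fun q hq ↦ ?_).trans ?_
    · have hq' := Nat.prime_of_mem_primeFactors hq
      exact pow_le_two_mul_of_pow_succ_sub_one_mul_log_le (by exact_mod_cast hq'.two_le) hu
        (hstar hq' (Nat.dvd_of_mem_primeFactors hq))
    · refine mul_le_mul_of_nonneg_right ?_ (log_nonneg (by linarith))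
      exact_mod_cast card_primeFactors_le_succ_div_two fun q hq ↦
        hmax q (Nat.prime_of_mem_primeFactors hq) (Nat.dvd_of_mem_primeFactors hq)
  have hlogN0 : 0 < log N := log_pos (by exact_mod_cast hGA1.1)
  exact (succ_div_two_mul_log_lt_of_le_mul_log hp hlogN0 hpu).not_ge hlogN
end

section
/- The only prime power that is a GA1 number is 4; that is, if N = p^k is composite and G(N) ≥ G(N/p), then N = 4. -/
open Real Filter

/-! If `m = p ^ j` and `N = p * m`, then `σ(N) = p σ(m) + 1`, so the abundancy `σ(N)/N` exceeds
`σ(m)/m ≥ 1` only by `1/N`. Meanwhile `1 - 1/x ≤ log x` gives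
`log log N - log log m ≥ log p / log N`, and the elementary bound `j (j + 1) (p - 1) < p ^ (j + 1)`
makes `log log m / N` smaller than that. Hence passing from `m` to `N` increases the denominator
`log log` relatively more than the abundancy, and `G N < G m` as soon as `log log m > 0`, i.e. `m ≥ 3`.
The only prime power `p ^ k` with `k ≥ 2` and `p ^ (k - 1) < 3` is `4`. -/

lemma mul_sub_one_mul_sub_one_lt_pow {x : ℝ} (hx : 2 ≤ x) {k : ℕ} (hk : 2 ≤ k) :
    k * (k - 1) * (x - 1) < x ^ k := by
  induction k, hk using Nat.le_induction with
  | base => push_cast; nlinarith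
  | succ k hk ih =>
    have hk2 : (2 : ℝ) ≤ k := by exact_mod_cast hk
    have hxk : 2 * k ≤ x ^ k := by
      rcases hk.eq_or_lt with rfl | hk3
      · push_cast; nlinarith
      · have : (3 : ℝ) ≤ k := by exact_mod_cast hk3
        have : (k : ℝ) * (k - 1) ≤ k * (k - 1) * (x - 1) :=
          le_mul_of_one_le_right (by nlinarith) (by linarith)
        nlinarith
    push_cast
    rw [pow_succ]
    nlinarith

lemma one_sub_div_le_log_sub_log {x y : ℝ} (hx : 0 < x) (hxy : x ≤ y) :
    1 - x / y ≤ log y - log x := by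
  have hy : 0 < y := hx.trans_le hxy
  rw [← log_div hy.ne' hx.ne', ← inv_div]
  exact one_sub_inv_le_log_of_pos (by positivity)

lemma log_log_pow_mul_log_pow_succ_lt {x : ℝ} (hx : 2 ≤ x) {j : ℕ} (hj : 1 ≤ j) :
    log (log (x ^ j)) * log (x ^ (j + 1)) < x ^ (j + 1) * log x := by
  have hlogx : 0 < log x := log_pos (by linarith)
  have hpoly := mul_sub_one_mul_sub_one_lt_pow hx (by omega : 2 ≤ j + 1)
  push_cast at hpoly
  have hloglog : log (log (x ^ j)) < j * log x := by
    rw [log_pow]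
    linarith [log_le_sub_one_of_pos (x := j * log x) (by positivity)]
  have hlog_le : log x ≤ x - 1 := log_le_sub_one_of_pos (by positivity)
  have hmul : log (log (x ^ j)) * (j + 1) < x ^ (j + 1) :=
    calc log (log (x ^ j)) * (j + 1) < j * log x * (j + 1) := by gcongr
      _ ≤ j * (x - 1) * (j + 1) := by gcongr
      _ < x ^ (j + 1) := by linarith
  rw [log_pow x (j + 1)]
  push_cast
  nlinarith

lemma sum_divisors_prime_pow_succ {p : ℕ} (hp : p.Prime) (j : ℕ) :
    ∑ d ∈ (p ^ (j + 1)).divisors, d = p * ∑ d ∈ (p ^ j).divisors, d + 1 := by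
  simp only [Nat.sum_divisors_prime_pow hp]
  exact geom_sum_succ

lemma sum_divisors_div_prime_pow_succ {p : ℕ} (hp : p.Prime) (j : ℕ) :
    (∑ d ∈ (p ^ (j + 1)).divisors, (d : ℝ)) / (p ^ (j + 1) : ℕ)
      = (∑ d ∈ (p ^ j).divisors, (d : ℝ)) / (p ^ j : ℕ) + 1 / (p ^ (j + 1) : ℕ) := by
  have hp0 : (p : ℝ) ≠ 0 := by exact_mod_cast hp.ne_zero
  rw [← Nat.cast_sum, ← Nat.cast_sum, sum_divisors_prime_pow_succ hp]
  push_cast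
  field_simp
  ring

lemma one_le_sum_divisors_div_self {n : ℕ} (hn : n ≠ 0) :
    1 ≤ (∑ d ∈ n.divisors, (d : ℝ)) / n := by
  rw [one_le_div₀ (Nat.cast_pos.mpr (Nat.pos_of_ne_zero hn))]
  exact Finset.single_le_sum (f := fun d : ℕ => (d : ℝ)) (fun _ _ => Nat.cast_nonneg _)
    (Nat.mem_divisors_self n hn)

lemma G_eq_div_log_log (n : ℕ) :
    G n = (∑ d ∈ n.divisors, (d : ℝ)) / n / log (log n) := by
  rw [G, div_div]

theorem G_prime_pow_succ_lt {p j : ℕ} (hp : p.Prime) (hpj : 3 ≤ p ^ j) :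
    G (p ^ (j + 1)) < G (p ^ j) := by
  have hj : 1 ≤ j := Nat.one_le_iff_ne_zero.mpr (by rintro rfl; simp at hpj)
  have hs := one_le_sum_divisors_div_self (pow_ne_zero j hp.ne_zero)
  rw [G_eq_div_log_log, G_eq_div_log_log, sum_divisors_div_prime_pow_succ hp]
  push_cast at hs ⊢
  set s := (∑ d ∈ (p ^ j).divisors, (d : ℝ)) / (p : ℝ) ^ j
  have hp2 : (2 : ℝ) ≤ p := by exact_mod_cast hp.two_le
  have hlogp : 0 < log p := log_pos (by linarith)
  have hlogm : 1 < log (p ^ j) := by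
    rw [lt_log_iff_exp_lt (by positivity)]
    have : (3 : ℝ) ≤ p ^ j := by exact_mod_cast hpj
    linarith [exp_one_lt_d9]
  have hlogN : log (p ^ (j + 1)) = log p + log (p ^ j) := by
    rw [pow_succ', log_mul (by positivity) (by positivity)]
  set Lm := log (log (p ^ j))
  set LN := log (log (p ^ (j + 1)))
  have hLm : 0 < Lm := log_pos hlogm
  have hgap : log p / log (p ^ (j + 1)) ≤ LN - Lm :=
    calc log p / log (p ^ (j + 1)) = 1 - log (p ^ j) / log (p ^ (j + 1)) := by
          rw [hlogN]; field_simp; ring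
      _ ≤ LN - Lm := one_sub_div_le_log_sub_log (by linarith) (by linarith)
  have hsmall : Lm / p ^ (j + 1) < log p / log (p ^ (j + 1)) := by
    rw [div_lt_div_iff₀ (by positivity) (by linarith)]
    linarith [log_log_pow_mul_log_pow_succ_lt hp2 hj]
  have hstep : Lm / p ^ (j + 1) < LN - Lm := hsmall.trans_le hgap
  have hLmN : 0 < Lm / p ^ (j + 1) := by positivity
  have hLN : 0 < LN := by linarith
  rw [div_lt_div_iff₀ hLN hLm]
  have : 1 / (p : ℝ) ^ (j + 1) * Lm = Lm / p ^ (j + 1) := by ring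
  nlinarith [mul_le_mul_of_nonneg_right hs (hLmN.trans hstep).le]

theorem stmt18 (N p k : ℕ) (hp : p.Prime) (hk : 2 ≤ k) (hN : N = p ^ k)
    (h : G (N / p) ≤ G N) :
    N = 4 := by
  by_contra hN4
  obtain ⟨j, rfl⟩ : ∃ j, k = j + 1 + 1 := ⟨k - 2, by omega⟩
  have hpj : 3 ≤ p ^ (j + 1) := by
    rcases hp.two_le.eq_or_lt with rfl | hp3
    · obtain ⟨i, rfl⟩ : ∃ i, j = i + 1 :=
        Nat.exists_eq_succ_of_ne_zero (by rintro rfl; exact hN4 hN)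
      calc 3 ≤ 2 ^ 2 := by norm_num
        _ ≤ 2 ^ (i + 1 + 1) := Nat.pow_le_pow_right (by norm_num) (by omega)
    · exact hp3.trans_le (Nat.le_self_pow (by omega) p)
  rw [hN, pow_succ, Nat.mul_div_cancel _ hp.pos, ← pow_succ] at h
  exact (G_prime_pow_succ_lt hp hpj).not_ge h
end

section
/- A squarefree product of three distinct primes N = p₁p₂p₃ cannot be a GA1 number. Equivalently, if N is squarefree with Ω(N) = 3, then G(N) < G(N/p) for some prime factor p of N. -/
/-! Write `N = q r p` with `q < r < p`; we show `G (q r p) < G (q r)`. Since `σ` is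
multiplicative this amounts to `(p + 1) log log n < p log log (n p)` for `n = q r`.
As `n < p²`, passing from `n` to `n p` multiplies `log n` by more than `3/2`, so the right side
gains at least `p log (3/2)`; this beats `log log n < log (2 log p)`, which grows only like
`log log p`. -/

open Real Filter

lemma log_le_div_exp_one {x : ℝ} (hx : 0 < x) : log x ≤ x / exp 1 := by
  have := Real.log_le_sub_one_of_pos (div_pos hx (Real.exp_pos 1))
  rw [Real.log_div hx.ne' (Real.exp_pos 1).ne', Real.log_exp] at this
  linarith

lemma two_fifths_le_log_three_halves : (2 : ℝ) / 5 ≤ log (3 / 2) := by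
  rw [Real.le_log_iff_exp_le (by norm_num)]
  have h5 : exp (2 / 5) ^ 5 = exp 1 ^ 2 := by
    rw [← Real.exp_nat_mul, ← Real.exp_nat_mul]; norm_num
  by_contra! h
  have : (3 / 2 : ℝ) ^ 5 < exp (2 / 5) ^ 5 := by gcongr
  nlinarith [Real.exp_pos 1, Real.exp_one_lt_d9]

lemma log_two_mul_log_lt_mul_log_three_halves {p : ℝ} (hp : 1 < p) :
    log (2 * log p) < p * log (3 / 2) := by
  have hlogp : 0 < log p := Real.log_pos hp
  have hp_div : p / exp 1 < 2 / 5 * p := by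
    rw [div_lt_iff₀ (Real.exp_pos 1)]
    nlinarith [Real.exp_one_gt_d9]
  calc log (2 * log p) = log 2 + log (log p) := Real.log_mul two_ne_zero hlogp.ne'
    _ ≤ log 2 + (log p - 1) := by gcongr; exact Real.log_le_sub_one_of_pos hlogp
    _ < p / exp 1 := by linarith [log_le_div_exp_one (by linarith : 0 < p), Real.log_two_lt_d9]
    _ < 2 / 5 * p := hp_div
    _ ≤ p * log (3 / 2) := by nlinarith [two_fifths_le_log_three_halves]

lemma add_one_mul_log_log_lt_mul_log_log_mul {M p : ℝ} (hM : exp 1 < M) (hMp : M < p ^ 2)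
    (hp : 0 < p) : (p + 1) * log (log M) < p * log (log (M * p)) := by
  have hM0 : 0 < M := (Real.exp_pos 1).trans hM
  have hlogM : 1 < log M := by rwa [Real.lt_log_iff_exp_lt hM0]
  have hp1 : 1 < p := by nlinarith [Real.add_one_lt_exp one_ne_zero]
  have hlogM_lt : log M < 2 * log p := by
    simpa [Real.log_pow] using Real.log_lt_log hM0 hMp
  have hgain : log (3 / 2) + log (log M) < log (log (M * p)) := by
    rw [← Real.log_mul (by norm_num) (by linarith), Real.log_mul hM0.ne' hp.ne']
    exact Real.log_lt_log (by linarith) (by linarith)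
  have hsmall : log (log M) < p * log (3 / 2) :=
    (Real.log_lt_log (by linarith) hlogM_lt).trans (log_two_mul_log_lt_mul_log_three_halves hp1)
  nlinarith [mul_lt_mul_of_pos_left hgain hp]

lemma sum_divisors_mul_prime {n p : ℕ} (hp : p.Prime) (hnp : n.Coprime p) :
    ∑ d ∈ (n * p).divisors, (d : ℝ) = (∑ d ∈ n.divisors, (d : ℝ)) * (p + 1) := by
  rw [← Nat.cast_sum, hnp.sum_divisors_mul, hp.divisors, Finset.sum_pair hp.one_lt.ne]
  push_cast
  ring

theorem G_mul_prime_lt {n p : ℕ} (hp : p.Prime) (hnp : n.Coprime p) (hn : 3 ≤ n)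
    (hn_lt : n < p ^ 2) : G (n * p) < G n := by
  have hn' : (3 : ℝ) ≤ n := by exact_mod_cast hn
  have hp' : (0 : ℝ) < p := by exact_mod_cast hp.pos
  have he : exp 1 < n := by linarith [Real.exp_one_lt_d9]
  have key := add_one_mul_log_log_lt_mul_log_log_mul he (by exact_mod_cast hn_lt) hp'
  have hσ : 0 < ∑ d ∈ n.divisors, (d : ℝ) :=
    Finset.sum_pos (fun d hd => by exact_mod_cast Nat.pos_of_mem_divisors hd)
      (Nat.nonempty_divisors.2 (by omega))
  have hL : 0 < log (log n) :=
    Real.log_pos (by rwa [Real.lt_log_iff_exp_lt (by linarith)])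
  have hL' : 0 < log (log (n * p)) := by nlinarith
  unfold G
  rw [sum_divisors_mul_prime hp hnp, Nat.cast_mul,
    div_lt_div_iff₀ (by positivity) (by positivity)]
  calc (∑ d ∈ n.divisors, (d : ℝ)) * (p + 1) * (n * log (log n))
      = (∑ d ∈ n.divisors, (d : ℝ)) * n * ((p + 1) * log (log n)) := by ring
    _ < (∑ d ∈ n.divisors, (d : ℝ)) * n * (p * log (log (n * p))) := by gcongr
    _ = (∑ d ∈ n.divisors, (d : ℝ)) * (n * p * log (log (n * p))) := by ring

lemma exists_primes_eq_mul_of_squarefree_cardFactors_eq_three {N : ℕ} (hsq : Squarefree N)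
    (hΩ : ArithmeticFunction.cardFactors N = 3) :
    ∃ q r p : ℕ, q.Prime ∧ r.Prime ∧ p.Prime ∧ q < r ∧ r < p ∧ N = q * r * p := by
  have hN : N ≠ 0 := hsq.ne_zero
  have hsorted : N.primeFactorsList.Pairwise (· < ·) :=
    List.sortedLT_iff_pairwise.1 <| (Nat.primeFactorsList_sorted N).sortedLT_of_nodup
      ((Nat.squarefree_iff_nodup_primeFactorsList hN).1 hsq)
  have hprime : ∀ p ∈ N.primeFactorsList, p.Prime := fun _ => Nat.prime_of_mem_primeFactorsList
  have hprod := Nat.prod_primeFactorsList hN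
  rw [ArithmeticFunction.cardFactors_apply] at hΩ
  match hl : N.primeFactorsList, hΩ with
  | [q, r, p], _ =>
    rw [hl] at hsorted hprime hprod
    simp only [List.pairwise_cons, List.mem_cons] at hsorted
    refine ⟨q, r, p, hprime q (by simp), hprime r (by simp), hprime p (by simp),
      hsorted.1 r (by simp), hsorted.2.1 p (by simp), ?_⟩
    simpa [mul_assoc] using hprod.symm

theorem stmt19 (N : ℕ) (hsq : Squarefree N) (hΩ : (ArithmeticFunction.cardFactors N) = 3) :
    ∃ p : ℕ, p.Prime ∧ p ∣ N ∧ G N < G (N / p) := by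
  obtain ⟨q, r, p, hq, hr, hp, hqr, hrp, rfl⟩ :=
    exists_primes_eq_mul_of_squarefree_cardFactors_eq_three hsq hΩ
  refine ⟨p, hp, dvd_mul_left p (q * r), ?_⟩
  rw [Nat.mul_div_cancel _ hp.pos]
  have hcop : (q * r).Coprime p := Nat.Coprime.mul_left
    ((Nat.coprime_primes hq hp).2 (by omega)) ((Nat.coprime_primes hr hp).2 hrp.ne)
  refine G_mul_prime_lt hp hcop ?_ ?_
  · nlinarith [hq.two_le]
  · nlinarith
end
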